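/- Let a, b, c be real numbers with a ≠ 0, let h ∈ ℝ, and let γ be a closed curve at level h of H. Then for all integers i ≥ 4 and j ≥ 0 one has I_{i,j}(γ) = (1/(2a(i+j+1)))·( 2(i−3)h·I_{i−4,j}(γ) − (2i+j−2)·I_{i−2,j}(γ) + (j(i−3)/(j+2))·I_{i−4,j+2}(γ) − ((i+j+1)·j·b/(j+2))·I_{i−2,j+2}(γ) ). -/

import Mathlib

/-- The Hamiltonian H(x,y) = x² − y² + a·x⁴ + c·y⁴ + b·x²·y². -/
noncomputable def Hfun (a b c x y : ℝ) : ℝ :=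
  x ^ 2 - y ^ 2 + a * x ^ 4 + c * y ^ 4 + b * x ^ 2 * y ^ 2

/-- The line integral I_{i,j}(γ) = ∮_γ x^i y^j dx along a parametrized curve of period T. -/
noncomputable def lineInt (x y : ℝ → ℝ) (T : ℝ) (i j : ℕ) : ℝ :=
  ∫ t in (0:ℝ)..T, x t ^ i * y t ^ j * deriv x t

/-!
Write `J_{i,j} = ∮ x^i y^j dy`. Along a closed curve at level `h` three families of linear
relations hold: `∮ d(x^{p+1} y^{q+1}) = 0`, i.e. `(p+1) I_{p,q+1} + (q+1) J_{p+1,q} = 0`;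
`∮ (H - h) x^p y^q dx = 0`; and `∮ x^p y^q dH = 0`, since `H` is constant along the curve.
Eliminating the `J`'s from the last family with the first one, and then the `c`-terms with
the second one, leaves the recursion for `I_{i,j}`.
-/

noncomputable def lineIntDy (x y : ℝ → ℝ) (T : ℝ) (i j : ℕ) : ℝ :=
  ∫ t in (0:ℝ)..T, x t ^ i * y t ^ j * deriv y t

open intervalIntegral

theorem hasDerivAt_Hfun_comp (a b c : ℝ) {x y : ℝ → ℝ} {x' y' t : ℝ}
    (hx : HasDerivAt x x' t) (hy : HasDerivAt y y' t) :
    HasDerivAt (fun s => Hfun a b c (x s) (y s))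
      ((2 * x t + 4 * a * x t ^ 3 + 2 * b * x t * y t ^ 2) * x'
        + (-2 * y t + 4 * c * y t ^ 3 + 2 * b * x t ^ 2 * y t) * y') t := by
  unfold Hfun
  refine (((((hx.fun_pow 2).fun_sub (hy.fun_pow 2)).fun_add ((hx.fun_pow 4).const_mul a)).fun_add
    ((hy.fun_pow 4).const_mul c)).fun_add (((hx.fun_pow 2).const_mul b).fun_mul
    (hy.fun_pow 2))).congr_deriv ?_
  norm_num
  ring

theorem Hfun_gradient_mul_deriv_eq_zero {a b c h : ℝ} {x y : ℝ → ℝ}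
    (hx : Differentiable ℝ x) (hy : Differentiable ℝ y)
    (hlev : ∀ t, Hfun a b c (x t) (y t) = h) (t : ℝ) :
    (2 * x t + 4 * a * x t ^ 3 + 2 * b * x t * y t ^ 2) * deriv x t
      + (-2 * y t + 4 * c * y t ^ 3 + 2 * b * x t ^ 2 * y t) * deriv y t = 0 := by
  have hconst : (fun s => Hfun a b c (x s) (y s)) = fun _ => h := funext hlev
  have hderiv := hasDerivAt_Hfun_comp a b c (hx t).hasDerivAt (hy t).hasDerivAt
  rw [hconst] at hderiv
  exact hderiv.unique (hasDerivAt_const t h)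

section ClosedCurve

variable {x y : ℝ → ℝ} {T : ℝ}

theorem lineInt_add_lineIntDy_eq_zero (hx : ContDiff ℝ 1 x) (hy : ContDiff ℝ 1 y)
    (hperx : x T = x 0) (hpery : y T = y 0) (p q : ℕ) :
    (p + 1 : ℝ) * lineInt x y T p (q + 1) + (q + 1 : ℝ) * lineIntDy x y T (p + 1) q = 0 := by
  have := hx.continuous; have := hy.continuous
  have := hx.continuous_deriv le_rfl; have := hy.continuous_deriv le_rfl
  have hderiv : ∀ t ∈ Set.uIcc 0 T, HasDerivAt (fun s => x s ^ (p + 1) * y s ^ (q + 1))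
      ((p + 1 : ℝ) * (x t ^ p * y t ^ (q + 1) * deriv x t)
        + (q + 1 : ℝ) * (x t ^ (p + 1) * y t ^ q * deriv y t)) t := fun t _ => by
    refine (((hx.differentiable one_ne_zero t).hasDerivAt.fun_pow (p + 1)).fun_mul
      ((hy.differentiable one_ne_zero t).hasDerivAt.fun_pow (q + 1))).congr_deriv ?_
    push_cast [Nat.add_sub_cancel]
    ring
  have hexact := integral_eq_sub_of_hasDerivAt hderiv
    (Continuous.intervalIntegrable (by fun_prop) 0 T)
  rw [hperx, hpery, sub_self] at hexact
  simpa (disch := apply Continuous.intervalIntegrable; fun_prop) only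
    [lineInt, lineIntDy, integral_add, integral_const_mul] using hexact

theorem lineInt_level_eq {a b c h : ℝ} (hx : ContDiff ℝ 1 x) (hy : Continuous y)
    (hlev : ∀ t, Hfun a b c (x t) (y t) = h) (p q : ℕ) :
    lineInt x y T (p + 2) q - lineInt x y T p (q + 2) + a * lineInt x y T (p + 4) q
      + c * lineInt x y T p (q + 4) + b * lineInt x y T (p + 2) (q + 2)
      = h * lineInt x y T p q := by
  have := hx.continuous; have := hx.continuous_deriv le_rfl
  have hlevel : ∫ t in (0:ℝ)..T, (x t ^ (p + 2) * y t ^ q * deriv x t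
        - x t ^ p * y t ^ (q + 2) * deriv x t + a * (x t ^ (p + 4) * y t ^ q * deriv x t)
        + c * (x t ^ p * y t ^ (q + 4) * deriv x t)
        + b * (x t ^ (p + 2) * y t ^ (q + 2) * deriv x t))
      = ∫ t in (0:ℝ)..T, h * (x t ^ p * y t ^ q * deriv x t) :=
    integral_congr fun t _ => by
      rw [← hlev t, Hfun]
      ring
  simpa (disch := apply Continuous.intervalIntegrable; fun_prop) only
    [lineInt, integral_add, integral_sub, integral_const_mul] using hlevel

theorem lineInt_gradient_eq_zero {a b c h : ℝ} (hx : ContDiff ℝ 1 x) (hy : ContDiff ℝ 1 y)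
    (hlev : ∀ t, Hfun a b c (x t) (y t) = h) (p q : ℕ) :
    2 * lineInt x y T (p + 1) q + 4 * a * lineInt x y T (p + 3) q
      + 2 * b * lineInt x y T (p + 1) (q + 2) - 2 * lineIntDy x y T p (q + 1)
      + 4 * c * lineIntDy x y T p (q + 3) + 2 * b * lineIntDy x y T (p + 2) (q + 1) = 0 := by
  have := hx.continuous; have := hy.continuous
  have := hx.continuous_deriv le_rfl; have := hy.continuous_deriv le_rfl
  have hgrad : ∫ t in (0:ℝ)..T, (2 * (x t ^ (p + 1) * y t ^ q * deriv x t)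
        + 4 * a * (x t ^ (p + 3) * y t ^ q * deriv x t)
        + 2 * b * (x t ^ (p + 1) * y t ^ (q + 2) * deriv x t)
        - 2 * (x t ^ p * y t ^ (q + 1) * deriv y t)
        + 4 * c * (x t ^ p * y t ^ (q + 3) * deriv y t)
        + 2 * b * (x t ^ (p + 2) * y t ^ (q + 1) * deriv y t))
      = ∫ _ in (0:ℝ)..T, (0:ℝ) :=
    integral_congr fun t _ => by
      linear_combination (x t ^ p * y t ^ q) * Hfun_gradient_mul_deriv_eq_zero
        (hx.differentiable one_ne_zero) (hy.differentiable one_ne_zero) hlev t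
  simpa (disch := apply Continuous.intervalIntegrable; fun_prop) only
    [lineInt, lineIntDy, integral_add, integral_sub, integral_const_mul, integral_zero]
    using hgrad

end ClosedCurve

theorem stmt3_general (a b c : ℝ) (ha : a ≠ 0) (h : ℝ)
    (x y : ℝ → ℝ) (T : ℝ)
    (hx : ContDiff ℝ 1 x) (hy : ContDiff ℝ 1 y)
    (hper : ∀ t : ℝ, x (t + T) = x t ∧ y (t + T) = y t)
    (hlev : ∀ t : ℝ, Hfun a b c (x t) (y t) = h) :
    ∀ i j : ℕ, 4 ≤ i →
      lineInt x y T i j =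
        (1 / (2 * a * ((i : ℝ) + (j : ℝ) + 1))) *
          (2 * ((i : ℝ) - 3) * h * lineInt x y T (i - 4) j
            - (2 * (i : ℝ) + (j : ℝ) - 2) * lineInt x y T (i - 2) j
            + ((j : ℝ) * ((i : ℝ) - 3) / ((j : ℝ) + 2)) * lineInt x y T (i - 4) (j + 2)
            - (((i : ℝ) + (j : ℝ) + 1) * (j : ℝ) * b / ((j : ℝ) + 2)) * lineInt x y T (i - 2) (j + 2)) := by
  intro i j hi
  obtain ⟨k, rfl⟩ : ∃ k, i = k + 4 := ⟨i - 4, by omega⟩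
  obtain ⟨hperx, hpery⟩ : x T = x 0 ∧ y T = y 0 := by simpa using hper 0
  have hexact := lineInt_add_lineIntDy_eq_zero hx hy hperx hpery
  have hlevel := lineInt_level_eq (T := T) hx hy.continuous hlev k j
  have hgrad := lineInt_gradient_eq_zero (T := T) hx hy hlev (k + 1) j
  have hexact₁ := hexact k (j + 1)
  have hexact₃ := hexact k (j + 3)
  have hexact₂ := hexact (k + 2) (j + 1)
  simp only [Nat.add_sub_cancel, show k + 4 - 2 = k + 2 by omega]
  push_cast at hlevel hgrad hexact₁ hexact₂ hexact₃ ⊢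
  have hk : (k + 4 + j + 1 : ℝ) ≠ 0 := by positivity
  have hj : (j + 2 : ℝ) ≠ 0 := by positivity
  field_simp
  linear_combination 2 * (k + 1) * (j + 2) * hlevel + (j + 2) * (j + 4) / 2 * hgrad
    + (j + 4) * hexact₁ - 2 * c * (j + 2) * hexact₃ - b * (j + 4) * hexact₂

theorem stmt3 (a b c : ℝ) (ha : a ≠ 0) (h : ℝ)
    (x y : ℝ → ℝ) (T : ℝ) (hT : 0 < T)
    (hx : ContDiff ℝ 1 x) (hy : ContDiff ℝ 1 y)
    (hper : ∀ t : ℝ, x (t + T) = x t ∧ y (t + T) = y t)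
    (hlev : ∀ t : ℝ, Hfun a b c (x t) (y t) = h) :
    ∀ i j : ℕ, 4 ≤ i →
      lineInt x y T i j =
        (1 / (2 * a * ((i : ℝ) + (j : ℝ) + 1))) *
          (2 * ((i : ℝ) - 3) * h * lineInt x y T (i - 4) j
            - (2 * (i : ℝ) + (j : ℝ) - 2) * lineInt x y T (i - 2) j
            + ((j : ℝ) * ((i : ℝ) - 3) / ((j : ℝ) + 2)) * lineInt x y T (i - 4) (j + 2)
            - (((i : ℝ) + (j : ℝ) + 1) * (j : ℝ) * b / ((j : ℝ) + 2)) * lineInt x y T (i - 2) (j + 2)) :=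
  stmt3_general a b c ha h x y T hx hy hper hlev
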